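/- arXiv:2311.08471 — 3 statements merged into one kernel-verified Lean document; each statement's English description precedes it below -/
import Mathlib

section
/- There exists a preorder ≽ on Δ that simultaneously satisfies Pareto, Converse Pareto, Independence, Sets of Utilities, and Negative Dominance. -/
open scoped BigOperators

noncomputable section

/-- A finite-support lottery on `X`. -/
structure Lottery (X : Type*) where
  val : X →₀ ℝ
  nonneg : ∀ x, 0 ≤ val x
  total : val.sum (fun _ p => p) = 1

namespace Lottery

variable {X : Type*}

/-- The point-mass lottery at `x`. -/
def delta (x : X) : Lottery X where
  val := Finsupp.single x 1
  nonneg := fun y => by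
    classical
    rw [Finsupp.single_apply]
    split <;> norm_num
  total := by
    rw [Finsupp.sum_single_index rfl]

/-- The mixture `α • f + (1 - α) • g`. -/
def mix (α : ℝ) (h1 : 0 ≤ α) (h2 : α ≤ 1) (f g : Lottery X) : Lottery X where
  val := α • f.val + (1 - α) • g.val
  nonneg := fun x => by
    have hf := f.nonneg x
    have hg := g.nonneg x
    simp only [Finsupp.coe_add, Finsupp.coe_smul, Pi.add_apply, Pi.smul_apply, smul_eq_mul]
    nlinarith
  total := by
    rw [Finsupp.sum_add_index' (fun _ => rfl) (fun _ _ _ => rfl)]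
    rw [Finsupp.sum_smul_index (fun _ => rfl), Finsupp.sum_smul_index (fun _ => rfl)]
    rw [← Finsupp.mul_sum, ← Finsupp.mul_sum, f.total, g.total]
    ring

/-- The uniform lottery on `a` and `b`, written `a/b` in the paper. -/
def unif (a b : X) : Lottery X := mix (1/2) (by norm_num) (by norm_num) (delta a) (delta b)

/-- Strict preference. -/
def SPref (R : Lottery X → Lottery X → Prop) (f g : Lottery X) : Prop := R f g ∧ ¬ R g f

/-- Indifference. -/
def Indiff (R : Lottery X → Lottery X → Prop) (f g : Lottery X) : Prop := R f g ∧ R g f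

/-- Incomparability. -/
def Incomp (R : Lottery X → Lottery X → Prop) (f g : Lottery X) : Prop := ¬ R f g ∧ ¬ R g f

/-- Negative Dominance. -/
def NegDominance (R : Lottery X → Lottery X → Prop) : Prop :=
  ∀ f g : Lottery X, SPref R f g →
    ∃ o ∈ f.val.support, ∃ o' ∈ g.val.support, SPref R (delta o) (delta o')

/-- Independence. -/
def Independence (R : Lottery X → Lottery X → Prop) : Prop :=
  ∀ f g h : Lottery X, ∀ α : ℝ, ∀ (h1 : 0 < α) (h2 : α < 1),
    (R f g ↔ R (mix α h1.le h2.le f h) (mix α h1.le h2.le g h))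

/-- The coordinatewise expectation of a lottery on `ℝ²`. -/
def expLot (f : Lottery (ℝ × ℝ)) : ℝ × ℝ :=
  (f.val.sum fun o p => p * o.1, f.val.sum fun o p => p * o.2)

/-- Pareto. -/
def Pareto (R : Lottery (ℝ × ℝ) → Lottery (ℝ × ℝ) → Prop) : Prop :=
  ∀ x y x' y' : ℝ, x' ≤ x → y' ≤ y → R (delta (x, y)) (delta (x', y'))

/-- Converse Pareto. -/
def ConvPareto (R : Lottery (ℝ × ℝ) → Lottery (ℝ × ℝ) → Prop) : Prop :=
  ∀ x y x' y' : ℝ, R (delta (x, y)) (delta (x', y')) → x' ≤ x ∧ y' ≤ y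

/-- Two outcomes are unidimensional with each other if they differ in at most one coordinate. -/
def UniWith {A B : Type*} (o o' : A × B) : Prop := o.1 = o'.1 ∨ o.2 = o'.2

/-- A lottery is unidimensional if any two outcomes in its support are unidimensional
with each other. -/
def Unidim {A B : Type*} (f : Lottery (A × B)) : Prop :=
  ∀ o ∈ f.val.support, ∀ o' ∈ f.val.support, UniWith o o'

/-- Expectationalism. -/
def Expectationalism (R : Lottery (ℝ × ℝ) → Lottery (ℝ × ℝ) → Prop) : Prop :=
  ∀ f, Indiff R f (delta (expLot f))

/-- Unidimensional Expectations. -/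
def UnidimExp (R : Lottery (ℝ × ℝ) → Lottery (ℝ × ℝ) → Prop) : Prop :=
  ∀ f, Unidim f → Indiff R f (delta (expLot f))

end Lottery

open Lottery

/-- A mixture-preserving real-valued function on lotteries. -/
def MixPres {X : Type*} (u : Lottery X → ℝ) : Prop :=
  ∀ f g : Lottery X, ∀ α : ℝ, ∀ (h1 : 0 ≤ α) (h2 : α ≤ 1),
    u (mix α h1 h2 f g) = α * u f + (1 - α) * u g

/-- Sets of Utilities. -/
def SetsOfUtilities (R : Lottery (ℝ × ℝ) → Lottery (ℝ × ℝ) → Prop) : Prop :=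
  ∃ U : Set (Lottery (ℝ × ℝ) → ℝ), U.Nonempty ∧ (∀ u ∈ U, MixPres u) ∧
    ∀ f g : Lottery (ℝ × ℝ), (R f g ↔ ∀ u ∈ U, u g ≤ u f)

/-- Expectation of `v` under a lottery. -/
noncomputable def Eu (v : ℝ × ℝ → ℝ) (f : Lottery (ℝ × ℝ)) : ℝ :=
  f.val.sum fun o p => p * v o

lemma Eu_delta (v : ℝ × ℝ → ℝ) (x : ℝ × ℝ) : Eu v (delta x) = v x := by
  simp [Eu, delta, Finsupp.sum_single_index]

lemma Eu_mix (v : ℝ × ℝ → ℝ) (α : ℝ) (h1 : 0 ≤ α) (h2 : α ≤ 1)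
    (f g : Lottery (ℝ × ℝ)) :
    Eu v (mix α h1 h2 f g) = α * Eu v f + (1 - α) * Eu v g := by
  unfold Eu mix
  rw [Finsupp.sum_add_index' (fun o => zero_mul (v o)) (fun o p q => add_mul p q (v o))]
  rw [Finsupp.sum_smul_index (fun o => zero_mul (v o)),
      Finsupp.sum_smul_index (fun o => zero_mul (v o))]
  simp only [smul_eq_mul, mul_assoc]
  rw [← Finsupp.mul_sum, ← Finsupp.mul_sum]

/-- The stochastic-dominance relation. -/
def SD (f g : Lottery (ℝ × ℝ)) : Prop :=
  ∀ v : ℝ × ℝ → ℝ, Monotone v → Eu v g ≤ Eu v f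

/-- Indicator of the upper set of `a`. -/
noncomputable def vInd (a : ℝ × ℝ) : ℝ × ℝ → ℝ := fun z => if a ≤ z then 1 else 0

lemma vInd_mono (a : ℝ × ℝ) : Monotone (vInd a) := by
  intro x y hxy
  unfold vInd
  split_ifs with h1 h2
  · exact le_refl 1
  · exact absurd (h1.trans hxy) h2
  · norm_num
  · exact le_refl 0

lemma SD_delta_iff (o o' : ℝ × ℝ) : SD (delta o) (delta o') ↔ o' ≤ o := by
  constructor
  · intro h
    have := h (vInd o') (vInd_mono o')
    rw [Eu_delta, Eu_delta] at this
    unfold vInd at this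
    rw [if_pos le_rfl] at this
    by_contra hc
    rw [if_neg hc] at this
    norm_num at this
  · intro h v hv
    rw [Eu_delta, Eu_delta]
    exact hv h

lemma Lottery.ext' {X : Type*} {f g : Lottery X} (h : f.val = g.val) : f = g := by
  cases f; cases g; simp_all

/-- There exists a preorder on Δ satisfying Pareto, Converse Pareto,
Independence, Sets of Utilities, and Negative Dominance. -/
theorem statement14 :
    ∃ R : Lottery (ℝ × ℝ) → Lottery (ℝ × ℝ) → Prop,
      Reflexive R ∧ Transitive R ∧ Pareto R ∧ ConvPareto R ∧
      Independence R ∧ SetsOfUtilities R ∧ NegDominance R := by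
  refine ⟨SD, ?_, ?_, ?_, ?_, ?_, ?_, ?_⟩
  · intro f v hv; exact le_refl _
  · intro f g h hfg hgh v hv; exact le_trans (hgh v hv) (hfg v hv)
  · intro x y x' y' hx hy
    rw [SD_delta_iff]
    exact Prod.mk_le_mk.mpr ⟨hx, hy⟩
  · intro x y x' y' h
    exact Prod.mk_le_mk.mp ((SD_delta_iff _ _).mp h)
  · intro f g h α h1 h2
    constructor
    · intro hR v hv
      rw [Eu_mix, Eu_mix]
      have := hR v hv
      nlinarith
    · intro hR v hv
      have := hR v hv
      rw [Eu_mix, Eu_mix] at this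
      have h3 : α * Eu v g ≤ α * Eu v f := by linarith
      exact le_of_mul_le_mul_left h3 h1
  · refine ⟨{u | ∃ v : ℝ × ℝ → ℝ, Monotone v ∧ u = Eu v}, ⟨Eu (fun _ => 0), fun _ => 0,
      monotone_const, rfl⟩, ?_, ?_⟩
    · rintro u ⟨v, hv, rfl⟩ f g α h1 h2
      exact Eu_mix v α h1 h2 f g
    · intro f g
      constructor
      · rintro h u ⟨v, hv, rfl⟩; exact h v hv
      · intro h v hv; exact h (Eu v) ⟨v, hv, rfl⟩
  · intro f g hSP
    by_contra hno
    push_neg at hno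
    -- key: g.val o' ≤ f.val o' for all o'
    have key : ∀ o' : ℝ × ℝ, g.val o' ≤ f.val o' := by
      intro o'
      by_cases ho' : o' ∈ g.val.support
      · have hEg : g.val o' ≤ Eu (vInd o') g := by
          unfold Eu Finsupp.sum
          have : g.val o' = g.val o' * vInd o' o' := by
            unfold vInd; simp
          rw [this]
          apply Finset.single_le_sum (f := fun o => g.val o * vInd o' o) _ ho'
          intro i _
          apply mul_nonneg (g.nonneg i)
          unfold vInd; split_ifs <;> norm_num
        have hEf : Eu (vInd o') f ≤ f.val o' := by
          unfold Eu Finsupp.sum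
          calc ∑ o ∈ f.val.support, f.val o * vInd o' o
              ≤ ∑ o ∈ f.val.support, (if o = o' then f.val o' else 0) := by
                apply Finset.sum_le_sum
                intro o ho
                unfold vInd
                split_ifs with h1 h2 h3
                · subst h2; simp
                · -- o' ≤ o, o ≠ o' : contradiction with hno
                  exfalso
                  apply hno o ho o' ho'
                  constructor
                  · exact (SD_delta_iff o o').mpr h1
                  · intro hR
                    exact h2 (le_antisymm ((SD_delta_iff o' o).mp hR) h1)
                · simpa using f.nonneg o'
                · simp
            _ ≤ f.val o' := by
                rw [Finset.sum_ite_eq' f.val.support o' (fun _ => f.val o')]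
                split_ifs with h1
                · exact le_refl _
                · exact f.nonneg o'
        have hR := hSP.1 (vInd o') (vInd_mono o')
        linarith
      · rw [Finsupp.notMem_support_iff.mp ho']
        exact f.nonneg o'
    -- both sum to 1, so equal
    have hfg : f = g := by
      apply Lottery.ext'
      ext o
      set s := f.val.support ∪ g.val.support with hs
      have hfs : ∑ o ∈ s, f.val o = 1 := by
        rw [← Finset.sum_subset (Finset.subset_union_left (s₂ := g.val.support))
          (fun x _ hx => Finsupp.notMem_support_iff.mp hx)]
        exact f.total
      have hgs : ∑ o ∈ s, g.val o = 1 := by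
        rw [← Finset.sum_subset (Finset.subset_union_right (s₁ := f.val.support))
          (fun x _ hx => Finsupp.notMem_support_iff.mp hx)]
        exact g.total
      have hzero : ∑ o ∈ s, (f.val o - g.val o) = 0 := by
        rw [Finset.sum_sub_distrib, hfs, hgs]; ring
      have heach := (Finset.sum_eq_zero_iff_of_nonneg
        (fun o _ => sub_nonneg.mpr (key o))).mp hzero
      by_cases ho : o ∈ s
      · have := heach o ho
        linarith [sub_eq_zero.mp this]
      · rw [hs, Finset.mem_union] at ho
        push_neg at ho
        rw [Finsupp.notMem_support_iff.mp ho.1, Finsupp.notMem_support_iff.mp ho.2]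
    exact hSP.2 (hfg ▸ hSP.1)
end
end

section
/- Let O₁ and O₂ be nonempty sets and O = O₁ × O₂, with preorders ≽₁ on Δ(O₁), ≽₂ on Δ(O₂), and a preorder ≽ on Δ(O). Suppose that for each i ∈ {1,2} there are aᵢ, bᵢ, cᵢ, dᵢ ∈ Oᵢ with δ_{aᵢ} ≻ᵢ δ_{bᵢ} ≻ᵢ δ_{cᵢ} ≻ᵢ δ_{dᵢ} and with the uniform lottery aᵢ/dᵢ ∼ᵢ δ_{bᵢ}. Then ≽ cannot simultaneously satisfy Pareto, Converse Pareto, Unanimous Equivalence, and Negative Dominance. -/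
open scoped BigOperators

noncomputable section

open Lottery

/-- Qualitative Pareto. -/
def QPareto {O₁ O₂ : Type*} (R1 : Lottery O₁ → Lottery O₁ → Prop)
    (R2 : Lottery O₂ → Lottery O₂ → Prop)
    (R : Lottery (O₁ × O₂) → Lottery (O₁ × O₂) → Prop) : Prop :=
  ∀ o₁ o₁' : O₁, ∀ o₂ o₂' : O₂,
    R1 (delta o₁) (delta o₁') → R2 (delta o₂) (delta o₂') →
      R (delta (o₁, o₂)) (delta (o₁', o₂'))

/-- Qualitative Converse Pareto. -/
def QConvPareto {O₁ O₂ : Type*} (R1 : Lottery O₁ → Lottery O₁ → Prop)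
    (R2 : Lottery O₂ → Lottery O₂ → Prop)
    (R : Lottery (O₁ × O₂) → Lottery (O₁ × O₂) → Prop) : Prop :=
  ∀ o₁ o₁' : O₁, ∀ o₂ o₂' : O₂,
    R (delta (o₁, o₂)) (delta (o₁', o₂')) →
      R1 (delta o₁) (delta o₁') ∧ R2 (delta o₂) (delta o₂')

/-- Unanimous Equivalence. -/
def UnanEquiv {O₁ O₂ : Type*} (R1 : Lottery O₁ → Lottery O₁ → Prop)
    (R2 : Lottery O₂ → Lottery O₂ → Prop)
    (R : Lottery (O₁ × O₂) → Lottery (O₁ × O₂) → Prop) : Prop :=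
  ∀ α : ℝ, ∀ (h1 : 0 ≤ α) (h2 : α ≤ 1), ∀ a₁ b₁ c₁ : O₁, ∀ a₂ b₂ c₂ : O₂,
    Indiff R1 (mix α h1 h2 (delta a₁) (delta c₁)) (delta b₁) →
    Indiff R2 (mix α h1 h2 (delta a₂) (delta c₂)) (delta b₂) →
    Indiff R (mix α h1 h2 (delta (a₁, a₂)) (delta (c₁, c₂))) (delta (b₁, b₂))

/-!
The lottery `f = (a₁, d₂)/(d₁, a₂)` is unanimously equivalent to `δ_{(b₁, b₂)}`, since
`a₁/d₁ ∼₁ δ_{b₁}` and `d₂/a₂ ∼₂ δ_{b₂}`; by Pareto and Converse Pareto `δ_{(b₁, b₂)}` is strictly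
better than `δ_{(c₁, c₂)}`, hence so is `f`. But each outcome of `f` is worse than `(c₁, c₂)` in
some coordinate (`d₂ ≺₂ c₂`, resp. `d₁ ≺₁ c₁`), so by Converse Pareto it is not even weakly better
than `(c₁, c₂)`, contradicting Negative Dominance.
-/

namespace Lottery

variable {X : Type*}

theorem val_injective : Function.Injective (val : Lottery X → X →₀ ℝ) := by
  rintro ⟨f, _, _⟩ ⟨g, _, _⟩ rfl
  rfl

theorem unif_comm (a b : X) : unif a b = unif b a := by
  apply val_injective
  show (1/2 : ℝ) • (delta a).val + (1 - 1/2) • (delta b).val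
    = (1/2 : ℝ) • (delta b).val + (1 - 1/2) • (delta a).val
  norm_num [add_comm]

theorem support_mix_subset [DecidableEq X] (α : ℝ) (h1 : 0 ≤ α) (h2 : α ≤ 1) (f g : Lottery X) :
    (mix α h1 h2 f g).val.support ⊆ f.val.support ∪ g.val.support :=
  Finsupp.support_add.trans
    (Finset.union_subset_union Finsupp.support_smul Finsupp.support_smul)

theorem support_delta (x : X) : (delta x).val.support = {x} :=
  Finsupp.support_single x one_ne_zero

theorem support_unif_subset [DecidableEq X] (a b : X) : (unif a b).val.support ⊆ {a, b} := by
  have h := support_mix_subset (1/2) (by norm_num) (by norm_num) (delta a) (delta b)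
  rwa [support_delta, support_delta] at h

theorem sPref_of_indiff_of_sPref {R : Lottery X → Lottery X → Prop} (ht : Transitive R)
    {f g h : Lottery X} (hfg : Indiff R f g) (hgh : SPref R g h) : SPref R f h :=
  ⟨ht hfg.1 hgh.1, fun hhf => hgh.2 (ht hhf hfg.1)⟩

theorem NegDominance.sPref_delta_of_sPref_unif {R : Lottery X → Lottery X → Prop}
    (hND : NegDominance R) {x y z : X} (h : SPref R (unif x y) (delta z)) :
    SPref R (delta x) (delta z) ∨ SPref R (delta y) (delta z) := by
  classical
  obtain ⟨o, ho, o', ho', hoo'⟩ := hND _ _ h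
  rw [support_delta, Finset.mem_singleton] at ho'
  subst ho'
  rcases Finset.mem_insert.1 (support_unif_subset x y ho) with rfl | ho
  · exact Or.inl hoo'
  · rw [Finset.mem_singleton.1 ho] at hoo'
    exact Or.inr hoo'

end Lottery

theorem QPareto.sPref_delta_prod {O₁ O₂ : Type*} {R1 : Lottery O₁ → Lottery O₁ → Prop}
    {R2 : Lottery O₂ → Lottery O₂ → Prop} {R : Lottery (O₁ × O₂) → Lottery (O₁ × O₂) → Prop}
    (hP : QPareto R1 R2 R) (hCP : QConvPareto R1 R2 R) {o₁ o₁' : O₁} {o₂ o₂' : O₂}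
    (h₁ : SPref R1 (delta o₁) (delta o₁')) (h₂ : R2 (delta o₂) (delta o₂')) :
    SPref R (delta (o₁, o₂)) (delta (o₁', o₂')) :=
  ⟨hP _ _ _ _ h₁.1 h₂, fun h => h₁.2 (hCP _ _ _ _ h).1⟩

theorem statement15_general {O₁ O₂ : Type*}
    (R1 : Lottery O₁ → Lottery O₁ → Prop) (R2 : Lottery O₂ → Lottery O₂ → Prop)
    (R : Lottery (O₁ × O₂) → Lottery (O₁ × O₂) → Prop)
    (ht : Transitive R)
    (hex1 : ∃ a b c d : O₁, SPref R1 (delta a) (delta b) ∧ SPref R1 (delta b) (delta c) ∧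
      SPref R1 (delta c) (delta d) ∧ Indiff R1 (unif a d) (delta b))
    (hex2 : ∃ a b c d : O₂, SPref R2 (delta a) (delta b) ∧ SPref R2 (delta b) (delta c) ∧
      SPref R2 (delta c) (delta d) ∧ Indiff R2 (unif a d) (delta b)) :
    ¬ (QPareto R1 R2 R ∧ QConvPareto R1 R2 R ∧ UnanEquiv R1 R2 R ∧ NegDominance R) := by
  rintro ⟨hP, hCP, hUE, hND⟩
  obtain ⟨a₁, b₁, c₁, d₁, -, hbc₁, hcd₁, had₁⟩ := hex1
  obtain ⟨a₂, b₂, c₂, d₂, -, hbc₂, hcd₂, had₂⟩ := hex2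
  have hda₂ : Indiff R2 (unif d₂ a₂) (delta b₂) := unif_comm a₂ d₂ ▸ had₂
  have hf : Indiff R (unif (a₁, d₂) (d₁, a₂)) (delta (b₁, b₂)) :=
    hUE _ _ _ a₁ b₁ d₁ d₂ b₂ a₂ had₁ hda₂
  have hbc : SPref R (delta (b₁, b₂)) (delta (c₁, c₂)) := hP.sPref_delta_prod hCP hbc₁ hbc₂.1
  rcases hND.sPref_delta_of_sPref_unif (sPref_of_indiff_of_sPref ht hf hbc) with h | h
  · exact hcd₂.2 (hCP _ _ _ _ h.1).2
  · exact hcd₁.2 (hCP _ _ _ _ h.1).1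

/-- qualitative inconsistency of Pareto, Converse Pareto, Unanimous
Equivalence, and Negative Dominance, given four strictly ordered elements in each
dimension with `aᵢ/dᵢ ∼ᵢ δ_{bᵢ}`. -/
theorem statement15 {O₁ O₂ : Type*} [Nonempty O₁] [Nonempty O₂]
    (R1 : Lottery O₁ → Lottery O₁ → Prop) (R2 : Lottery O₂ → Lottery O₂ → Prop)
    (R : Lottery (O₁ × O₂) → Lottery (O₁ × O₂) → Prop)
    (h1r : Reflexive R1) (h1t : Transitive R1)
    (h2r : Reflexive R2) (h2t : Transitive R2)
    (hr : Reflexive R) (ht : Transitive R)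
    (hex1 : ∃ a b c d : O₁, SPref R1 (delta a) (delta b) ∧ SPref R1 (delta b) (delta c) ∧
      SPref R1 (delta c) (delta d) ∧ Indiff R1 (unif a d) (delta b))
    (hex2 : ∃ a b c d : O₂, SPref R2 (delta a) (delta b) ∧ SPref R2 (delta b) (delta c) ∧
      SPref R2 (delta c) (delta d) ∧ Indiff R2 (unif a d) (delta b)) :
    ¬ (QPareto R1 R2 R ∧ QConvPareto R1 R2 R ∧ UnanEquiv R1 R2 R ∧ NegDominance R) :=
  statement15_general R1 R2 R ht hex1 hex2
end
end

section
/- Let O₁ and O₂ be nonempty sets and O = O₁ × O₂, with preorders ≽₁ on Δ(O₁), ≽₂ on Δ(O₂), and a preorder ≽ on Δ(O). Suppose that for each i ∈ {1,2} there are aᵢ, bᵢ, cᵢ, dᵢ ∈ Oᵢ with δ_{aᵢ} ≻ᵢ δ_{bᵢ} ≻ᵢ δ_{cᵢ} ≻ᵢ δ_{dᵢ}, with the uniform lottery aᵢ/dᵢ ∼ᵢ δ_{bᵢ} and with δ_{cᵢ} ≽ᵢ bᵢ/dᵢ. Then ≽ cannot simultaneously satisfy Pareto, Converse Pareto, Independence,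 Unidimensional Dimensional Separability, and Negative Dominance. -/
open scoped BigOperators

noncomputable section

open Lottery

/-- The embedding `o₁ ↦ (o₁, o₂)`. -/
def fixSnd {O₁ O₂ : Type*} (o₂ : O₂) : O₁ ↪ O₁ × O₂ :=
  ⟨fun o₁ => (o₁, o₂), fun a b h => by simpa using congrArg Prod.fst h⟩

/-- The embedding `o₂ ↦ (o₁, o₂)`. -/
def fixFst {O₁ O₂ : Type*} (o₁ : O₁) : O₂ ↪ O₁ × O₂ :=
  ⟨fun o₂ => (o₁, o₂), fun a b h => by simpa using congrArg Prod.snd h⟩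

/-- The lottery `(f₁, o₂)` on `O₁ × O₂` obtained from a lottery on `O₁`. -/
noncomputable def embed1 {O₁ O₂ : Type*} (f : Lottery O₁) (o₂ : O₂) : Lottery (O₁ × O₂) where
  val := f.val.embDomain (fixSnd o₂)
  nonneg := fun x => by
    rcases em (x ∈ Set.range (fixSnd (O₁ := O₁) o₂)) with ⟨a, rfl⟩ | hx
    · rw [Finsupp.embDomain_apply_self]; exact f.nonneg a
    · rw [Finsupp.embDomain_notin_range _ _ _ hx]
  total := by
    rw [Finsupp.sum_embDomain]
    exact f.total

/-- The lottery `(f₂, o₁)` on `O₁ × O₂` obtained from a lottery on `O₂`. -/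
noncomputable def embed2 {O₁ O₂ : Type*} (f : Lottery O₂) (o₁ : O₁) : Lottery (O₁ × O₂) where
  val := f.val.embDomain (fixFst o₁)
  nonneg := fun x => by
    rcases em (x ∈ Set.range (fixFst (O₂ := O₂) o₁)) with ⟨a, rfl⟩ | hx
    · rw [Finsupp.embDomain_apply_self]; exact f.nonneg a
    · rw [Finsupp.embDomain_notin_range _ _ _ hx]
  total := by
    rw [Finsupp.sum_embDomain]
    exact f.total

/-- Unidimensional Dimensional Separability. -/
def UnidimDimSep {O₁ O₂ : Type*} (R1 : Lottery O₁ → Lottery O₁ → Prop)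
    (R2 : Lottery O₂ → Lottery O₂ → Prop)
    (R : Lottery (O₁ × O₂) → Lottery (O₁ × O₂) → Prop) : Prop :=
  (∀ f₁ g₁ : Lottery O₁, R1 f₁ g₁ ↔ ∀ o₂ : O₂, R (embed1 f₁ o₂) (embed1 g₁ o₂)) ∧
  (∀ f₂ g₂ : Lottery O₂, R2 f₂ g₂ ↔ ∀ o₁ : O₁, R (embed2 f₂ o₁) (embed2 g₂ o₁))


/-! Let `f = (a₁, c₂)/(c₁, a₂)`. By Converse Pareto neither outcome of `f` is preferred to
`(b₁, b₂)`, so Negative Dominance forbids `f ≻ (b₁, b₂)`. But Dimensional Separability lets us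
replace `cᵢ` by `bᵢ/dᵢ` and then `bᵢ` by `aᵢ/dᵢ`, giving
`f ≽ ¼ (a₁, a₂) + ⅜ (a₁, d₂) + ⅜ (d₁, a₂)`. By Independence and the strict Pareto preference
`(a₁, d₂)/(d₁, a₂) ≻ (d₁, d₂)` this is strictly better than
`¼ (a₁, a₂) + ¼ (a₁, d₂) + ¼ (d₁, a₂) + ¼ (d₁, d₂) = ((a₁, a₂)/(a₁, d₂))/((d₁, a₂)/(d₁, d₂))`,
which `aᵢ/dᵢ ≽ᵢ bᵢ` and Dimensional Separability put above `(b₁, b₂)`. -/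

namespace Lottery

variable {X : Type*}

theorem ext {f g : Lottery X} (h : f.val = g.val) : f = g := by
  cases f; cases g; simp_all

def half (f g : Lottery X) : Lottery X := mix (1/2) (by norm_num) (by norm_num) f g

theorem half_val (f g : Lottery X) : (half f g).val = (1/2 : ℝ) • f.val + (1 - 1/2 : ℝ) • g.val :=
  rfl

theorem unif_eq_half (a b : X) : unif a b = half (delta a) (delta b) := rfl

theorem half_self (f : Lottery X) : half f f = f := ext <| by rw [half_val]; module

theorem half_comm (f g : Lottery X) : half f g = half g f := ext <| by simp only [half_val]; module

theorem mem_support_half {f g : Lottery X} {x : X} (hx : x ∈ (half f g).val.support) :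
    x ∈ f.val.support ∨ x ∈ g.val.support := by
  contrapose! hx
  simp_all [half_val]

theorem mem_support_delta {x y : X} (hy : y ∈ (delta x).val.support) : y = x := by
  classical
  simpa [delta, Finsupp.single_apply, eq_comm] using hy

section Relation

variable {R : Lottery X → Lottery X → Prop}

theorem sPref_of_sPref_of_le (ht : Transitive R) {f g h : Lottery X} (hfg : SPref R f g)
    (hgh : R g h) : SPref R f h :=
  ⟨ht hfg.1 hgh, fun hhf => hfg.2 (ht hgh hhf)⟩

theorem sPref_of_le_of_sPref (ht : Transitive R) {f g h : Lottery X} (hfg : R f g)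
    (hgh : SPref R g h) : SPref R f h :=
  ⟨ht hfg hgh.1, fun hhf => hgh.2 (ht hhf hfg)⟩

theorem Independence.half_le_half_left (hI : Independence R) {f g : Lottery X} (hfg : R f g)
    (k : Lottery X) : R (half f k) (half g k) :=
  (hI f g k (1/2) (by norm_num) (by norm_num)).mp hfg

theorem Independence.half_le_half_right (hI : Independence R) {f g : Lottery X} (hfg : R f g)
    (k : Lottery X) : R (half k f) (half k g) := by
  rw [half_comm k f, half_comm k g]
  exact hI.half_le_half_left hfg k

theorem Independence.half_le_half (hI : Independence R) (ht : Transitive R)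
    {f f' g g' : Lottery X} (hf : R f f') (hg : R g g') : R (half f g) (half f' g') :=
  ht (hI.half_le_half_left hf g) (hI.half_le_half_right hg f')

theorem Independence.sPref_half_left (hI : Independence R) {f g : Lottery X}
    (hfg : SPref R f g) (k : Lottery X) : SPref R (half f k) (half g k) :=
  ⟨hI.half_le_half_left hfg.1 k,
    fun h => hfg.2 ((hI g f k (1/2) (by norm_num) (by norm_num)).mpr h)⟩

theorem NegDominance.not_sPref_half_delta (hND : NegDominance R) {x y z : X}
    (hx : ¬ R (delta x) (delta z)) (hy : ¬ R (delta y) (delta z)) :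
    ¬ SPref R (half (delta x) (delta y)) (delta z) := by
  intro h
  obtain ⟨o, ho, o', ho', hoo'⟩ := hND _ _ h
  obtain rfl := mem_support_delta ho'
  rcases mem_support_half ho with ho | ho <;> obtain rfl := mem_support_delta ho
  exacts [hx hoo'.1, hy hoo'.1]

end Relation

end Lottery

section Product

variable {O₁ O₂ : Type*}

theorem embed1_delta (x : O₁) (y : O₂) : embed1 (delta x) y = delta (x, y) :=
  Lottery.ext <| Finsupp.embDomain_single _ _ _

theorem embed2_delta (y : O₂) (x : O₁) : embed2 (delta y) x = delta (x, y) :=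
  Lottery.ext <| Finsupp.embDomain_single _ _ _

theorem embed1_half (f g : Lottery O₁) (y : O₂) :
    embed1 (half f g) y = half (embed1 f y) (embed1 g y) := by
  refine Lottery.ext ?_
  simp only [embed1, half_val, Finsupp.embDomain_eq_mapDomain, Finsupp.mapDomain_add,
    Finsupp.mapDomain_smul]

theorem embed2_half (f g : Lottery O₂) (x : O₁) :
    embed2 (half f g) x = half (embed2 f x) (embed2 g x) := by
  refine Lottery.ext ?_
  simp only [embed2, half_val, Finsupp.embDomain_eq_mapDomain, Finsupp.mapDomain_add,
    Finsupp.mapDomain_smul]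

theorem embed1_unif (x x' : O₁) (y : O₂) :
    embed1 (unif x x') y = half (delta (x, y)) (delta (x', y)) := by
  rw [unif_eq_half, embed1_half, embed1_delta, embed1_delta]

theorem embed2_unif (y y' : O₂) (x : O₁) :
    embed2 (unif y y') x = half (delta (x, y)) (delta (x, y')) := by
  rw [unif_eq_half, embed2_half, embed2_delta, embed2_delta]

variable {R1 : Lottery O₁ → Lottery O₁ → Prop} {R2 : Lottery O₂ → Lottery O₂ → Prop}
  {R : Lottery (O₁ × O₂) → Lottery (O₁ × O₂) → Prop}

theorem UnidimDimSep.embed1_le (h : UnidimDimSep R1 R2 R) {f g : Lottery O₁} (hfg : R1 f g)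
    (y : O₂) : R (embed1 f y) (embed1 g y) :=
  (h.1 f g).mp hfg y

theorem UnidimDimSep.embed2_le (h : UnidimDimSep R1 R2 R) {f g : Lottery O₂} (hfg : R2 f g)
    (x : O₁) : R (embed2 f x) (embed2 g x) :=
  (h.2 f g).mp hfg x

theorem QPareto.sPref_of_sPref_fst (hP : QPareto R1 R2 R) (hC : QConvPareto R1 R2 R)
    {x x' : O₁} {y y' : O₂} (hx : SPref R1 (delta x) (delta x')) (hy : R2 (delta y) (delta y')) :
    SPref R (delta (x, y)) (delta (x', y')) :=
  ⟨hP _ _ _ _ hx.1 hy, fun h => hx.2 (hC _ _ _ _ h).1⟩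

end Product

section Construction

variable {O₁ O₂ : Type*} {R1 : Lottery O₁ → Lottery O₁ → Prop}
  {R2 : Lottery O₂ → Lottery O₂ → Prop} {R : Lottery (O₁ × O₂) → Lottery (O₁ × O₂) → Prop}
  {a₁ b₁ c₁ d₁ : O₁} {a₂ b₂ c₂ d₂ : O₂}

theorem QPareto.sPref_half_delta (hP : QPareto R1 R2 R) (hC : QConvPareto R1 R2 R)
    (hI : Independence R) (ht : Transitive R) (h1r : Reflexive R1) (h2r : Reflexive R2)
    (had₁ : SPref R1 (delta a₁) (delta d₁)) (had₂ : R2 (delta a₂) (delta d₂)) :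
    SPref R (half (delta (a₁, d₂)) (delta (d₁, a₂))) (delta (d₁, d₂)) := by
  have had : SPref R (delta (a₁, d₂)) (delta (d₁, d₂)) := hP.sPref_of_sPref_fst hC had₁ (h2r _)
  have hda : R (half (delta (d₁, d₂)) (delta (d₁, a₂))) (delta (d₁, d₂)) := by
    simpa only [half_self] using hI.half_le_half_right (hP d₁ d₁ _ _ (h1r _) had₂) (delta (d₁, d₂))
  exact sPref_of_sPref_of_le ht (hI.sPref_half_left had _) hda

theorem UnidimDimSep.half_delta_le (hUDS : UnidimDimSep R1 R2 R) (hI : Independence R)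
    (ht : Transitive R) (hb₁ : R1 (delta b₁) (unif a₁ d₁)) (hc₁ : R1 (delta c₁) (unif b₁ d₁))
    (hb₂ : R2 (delta b₂) (unif a₂ d₂)) (hc₂ : R2 (delta c₂) (unif b₂ d₂)) :
    R (half (delta (a₁, c₂)) (delta (c₁, a₂)))
      (half (half (half (delta (a₁, d₂)) (delta (d₁, a₂))) (delta (a₁, a₂)))
        (half (delta (a₁, d₂)) (delta (d₁, a₂)))) := by
  have hac : R (delta (a₁, c₂)) (half (delta (a₁, b₂)) (delta (a₁, d₂))) := by
    simpa only [embed2_delta, embed2_unif] using hUDS.embed2_le hc₂ a₁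
  have hca : R (delta (c₁, a₂)) (half (delta (b₁, a₂)) (delta (d₁, a₂))) := by
    simpa only [embed1_delta, embed1_unif] using hUDS.embed1_le hc₁ a₂
  have hab : R (delta (a₁, b₂)) (half (delta (a₁, a₂)) (delta (a₁, d₂))) := by
    simpa only [embed2_delta, embed2_unif] using hUDS.embed2_le hb₂ a₁
  have hba : R (delta (b₁, a₂)) (half (delta (a₁, a₂)) (delta (d₁, a₂))) := by
    simpa only [embed1_delta, embed1_unif] using hUDS.embed1_le hb₁ a₂
  have heq : half (half (half (delta (a₁, a₂)) (delta (a₁, d₂))) (delta (a₁, d₂)))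
        (half (half (delta (a₁, a₂)) (delta (d₁, a₂))) (delta (d₁, a₂))) =
      half (half (half (delta (a₁, d₂)) (delta (d₁, a₂))) (delta (a₁, a₂)))
        (half (delta (a₁, d₂)) (delta (d₁, a₂))) :=
    Lottery.ext <| by simp only [half_val]; module
  rw [← heq]
  exact hI.half_le_half ht (ht hac (hI.half_le_half_left hab _))
    (ht hca (hI.half_le_half_left hba _))

theorem UnidimDimSep.le_delta (hUDS : UnidimDimSep R1 R2 R) (hI : Independence R)
    (ht : Transitive R) (hb₁ : R1 (unif a₁ d₁) (delta b₁)) (hb₂ : R2 (unif a₂ d₂) (delta b₂)) :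
    R (half (half (delta (d₁, d₂)) (delta (a₁, a₂))) (half (delta (a₁, d₂)) (delta (d₁, a₂))))
      (delta (b₁, b₂)) := by
  have hab : R (half (delta (a₁, a₂)) (delta (a₁, d₂))) (delta (a₁, b₂)) := by
    simpa only [embed2_delta, embed2_unif] using hUDS.embed2_le hb₂ a₁
  have hdb : R (half (delta (d₁, a₂)) (delta (d₁, d₂))) (delta (d₁, b₂)) := by
    simpa only [embed2_delta, embed2_unif] using hUDS.embed2_le hb₂ d₁
  have hbb : R (half (delta (a₁, b₂)) (delta (d₁, b₂))) (delta (b₁, b₂)) := by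
    simpa only [embed1_delta, embed1_unif] using hUDS.embed1_le hb₁ b₂
  have heq : half (half (delta (d₁, d₂)) (delta (a₁, a₂))) (half (delta (a₁, d₂)) (delta (d₁, a₂)))
      = half (half (delta (a₁, a₂)) (delta (a₁, d₂))) (half (delta (d₁, a₂)) (delta (d₁, d₂))) :=
    Lottery.ext <| by simp only [half_val]; module
  rw [heq]
  exact ht (hI.half_le_half ht hab hdb) hbb

end Construction

theorem statement16_general {O₁ O₂ : Type*}
    (R1 : Lottery O₁ → Lottery O₁ → Prop) (R2 : Lottery O₂ → Lottery O₂ → Prop)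
    (R : Lottery (O₁ × O₂) → Lottery (O₁ × O₂) → Prop)
    (h1r : Reflexive R1) (h1t : Transitive R1)
    (h2r : Reflexive R2) (h2t : Transitive R2)
    (ht : Transitive R)
    (hex1 : ∃ a b c d : O₁, SPref R1 (delta a) (delta b) ∧ SPref R1 (delta b) (delta c) ∧
      SPref R1 (delta c) (delta d) ∧ Indiff R1 (unif a d) (delta b) ∧
      R1 (delta c) (unif b d))
    (hex2 : ∃ a b c d : O₂, SPref R2 (delta a) (delta b) ∧ SPref R2 (delta b) (delta c) ∧
      SPref R2 (delta c) (delta d) ∧ Indiff R2 (unif a d) (delta b) ∧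
      R2 (delta c) (unif b d)) :
    ¬ (QPareto R1 R2 R ∧ QConvPareto R1 R2 R ∧ Independence R ∧
        UnidimDimSep R1 R2 R ∧ NegDominance R) := by
  rintro ⟨hP, hC, hI, hUDS, hND⟩
  obtain ⟨a₁, b₁, c₁, d₁, hab₁, hbc₁, hcd₁, hb₁, hc₁⟩ := hex1
  obtain ⟨a₂, b₂, c₂, d₂, hab₂, hbc₂, hcd₂, hb₂, hc₂⟩ := hex2
  have had₁ : SPref R1 (delta a₁) (delta d₁) := sPref_of_sPref_of_le h1t hab₁ (h1t hbc₁.1 hcd₁.1)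
  have had₂ : R2 (delta a₂) (delta d₂) := h2t hab₂.1 (h2t hbc₂.1 hcd₂.1)
  have hs := hP.sPref_half_delta hC hI ht h1r h2r had₁ had₂
  have hf : SPref R (half (delta (a₁, c₂)) (delta (c₁, a₂))) (delta (b₁, b₂)) :=
    sPref_of_sPref_of_le ht
      (sPref_of_le_of_sPref ht (hUDS.half_delta_le hI ht hb₁.2 hc₁ hb₂.2 hc₂)
        (hI.sPref_half_left (hI.sPref_half_left hs _) _))
      (hUDS.le_delta hI ht hb₁.1 hb₂.1)
  exact hND.not_sPref_half_delta (fun h => hbc₂.2 (hC _ _ _ _ h).2)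
    (fun h => hbc₁.2 (hC _ _ _ _ h).1) hf

/-- qualitative inconsistency of Pareto, Converse Pareto, Independence,
Unidimensional Dimensional Separability, and Negative Dominance, given four strictly
ordered elements in each dimension with `aᵢ/dᵢ ∼ᵢ δ_{bᵢ}` and `δ_{cᵢ} ≽ᵢ bᵢ/dᵢ`. -/
theorem statement16 {O₁ O₂ : Type*} [Nonempty O₁] [Nonempty O₂]
    (R1 : Lottery O₁ → Lottery O₁ → Prop) (R2 : Lottery O₂ → Lottery O₂ → Prop)
    (R : Lottery (O₁ × O₂) → Lottery (O₁ × O₂) → Prop)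
    (h1r : Reflexive R1) (h1t : Transitive R1)
    (h2r : Reflexive R2) (h2t : Transitive R2)
    (hr : Reflexive R) (ht : Transitive R)
    (hex1 : ∃ a b c d : O₁, SPref R1 (delta a) (delta b) ∧ SPref R1 (delta b) (delta c) ∧
      SPref R1 (delta c) (delta d) ∧ Indiff R1 (unif a d) (delta b) ∧
      R1 (delta c) (unif b d))
    (hex2 : ∃ a b c d : O₂, SPref R2 (delta a) (delta b) ∧ SPref R2 (delta b) (delta c) ∧
      SPref R2 (delta c) (delta d) ∧ Indiff R2 (unif a d) (delta b) ∧
      R2 (delta c) (unif b d)) :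
    ¬ (QPareto R1 R2 R ∧ QConvPareto R1 R2 R ∧ Independence R ∧
        UnidimDimSep R1 R2 R ∧ NegDominance R) :=
  statement16_general R1 R2 R h1r h1t h2r h2t ht hex1 hex2
end
end
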